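/- Let R be a commutative ring and let ω ∈ R satisfy ω² + ω + 1 = 0 (so that ω³ = 1 and ω is a unit in R). Then in the ring of formal power series R[[q]] one has the identity ∏_{n≥1} (1−q^n)(1−q^{19n})⁷(1−ω²q^{19n})(1−ω⁻²q^{19n})(1−ω⁴q^{19n})(1−ω⁻⁴q^{19n})(1−ω⁸q^{19n})(1−ω⁻⁸q^{19n})(1−ω¹⁰q^{19n})(1−ω⁻¹⁰q^{19n})(1−ω¹⁴q^{19n})(1−ω⁻¹⁴q^{19n})(1−ω¹⁶q^{19n})(1−ω⁻¹⁶q^{19n}) · ((1−ωq^n)(1−ω⁻¹q^n))⁻¹ = ∏_{n≥1} (1−q^n)²(1−q^{19n})(1−q^{57n})⁶ · (1−q^{3n})⁻¹. -/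

import Mathlib

open PowerSeries LaurentPolynomial Finset

/-- The factor `1 - c·q^m` of an infinite product, as a formal power series. -/
noncomputable def factor {R : Type*} [CommRing R] (c : R) (m : ℕ) : PowerSeries R :=
  1 - PowerSeries.C c * PowerSeries.X ^ m

/-- The infinite product `∏_{n ≥ 1} f n` in `R[[q]]`, for a sequence of factors in which the
`n`-th factor is congruent to `1` modulo `q^n`: it is defined coefficientwise, the coefficient
of `q^m` being the (stabilized) coefficient of `q^m` in the partial product of the factors with
index `1, …, m+1`, which agrees with the limit of the partial products in the `q`-adic topology. -/
noncomputable def infiniteProd {R : Type*} [CommRing R] (f : ℕ → PowerSeries R) : PowerSeries R :=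
  PowerSeries.mk fun m => PowerSeries.coeff m (∏ n ∈ Finset.range (m + 1), f (n + 1))

/-!
The identity holds factor by factor. As `ω` is a primitive cube root of unity, `ω⁻¹ = ω²` and
each `ω^{±2k}` with `3 ∤ k` is `ω` or `ω²`, so the twelve twisted factors at `q^{19n}` pair off
into six copies of `(1 - ω q^{19n})(1 - ω² q^{19n})`. The factorisation
`(1 - x)(1 - ω x)(1 - ω² x) = 1 - x³` then turns them, together with six of the seven untwisted
ones, into `(1 - q^{57n})⁶`, and inverts `(1 - ω q^n)(1 - ω² q^n)` to `(1 - q^n)/(1 - q^{3n})`.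
-/

theorem infiniteProd_congr {R : Type*} [CommRing R] {f g : ℕ → PowerSeries R}
    (h : ∀ n, 0 < n → f n = g n) : infiniteProd f = infiniteProd g := by
  unfold infiniteProd
  congr! 4 with m n
  exact h (n + 1) n.succ_pos

theorem isUnit_factor {R : Type*} [CommRing R] (c : R) {m : ℕ} (hm : 0 < m) :
    IsUnit (factor c m) := by
  simp [factor, isUnit_iff_constantCoeff, zero_pow hm.ne']

section PrimitiveCubeRoot

variable {R : Type*} [CommRing R] {ω : R}

theorem mul_sq_eq_one_of_sq_add_add_one (hω : ω ^ 2 + ω + 1 = 0) : ω * ω ^ 2 = 1 := by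
  linear_combination (ω - 1) * hω

theorem pow_add_three_of_sq_add_add_one (hω : ω ^ 2 + ω + 1 = 0) (n : ℕ) :
    ω ^ (n + 3) = ω ^ n := by
  linear_combination ω ^ n * (ω - 1) * hω

theorem inverse_eq_sq_of_sq_add_add_one (hω : ω ^ 2 + ω + 1 = 0) : Ring.inverse ω = ω ^ 2 := by
  have hunit := mul_sq_eq_one_of_sq_add_add_one hω
  simpa using (Ring.inverse_mul_eq_iff_eq_mul ω 1 (ω ^ 2) (IsUnit.of_mul_eq_one _ hunit)).2
    hunit.symm

theorem factor_one_mul_factor_mul_factor_sq (hω : ω ^ 2 + ω + 1 = 0) (m : ℕ) :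
    factor 1 m * (factor ω m * factor (ω ^ 2) m) = factor 1 (3 * m) := by
  have hC : (PowerSeries.C ω : PowerSeries R) ^ 2 + PowerSeries.C ω + 1 = 0 := by
    simpa using congrArg (PowerSeries.C : R →+* PowerSeries R) hω
  simp only [factor, map_one, map_pow, one_mul, pow_mul' X 3 m]
  linear_combination
    (-X ^ m + PowerSeries.C ω * (X ^ m) ^ 2 - (PowerSeries.C ω - 1) * (X ^ m) ^ 3) * hC

theorem inverse_factor_mul_factor_sq (hω : ω ^ 2 + ω + 1 = 0) {m : ℕ} (hm : 0 < m) :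
    Ring.inverse (factor ω m * factor (ω ^ 2) m) =
      factor 1 m * Ring.inverse (factor 1 (3 * m)) := by
  rw [← factor_one_mul_factor_mul_factor_sq hω, Ring.mul_inverse_rev (factor 1 m), mul_left_comm,
    Ring.mul_inverse_cancel _ (isUnit_factor 1 hm), mul_one]

end PrimitiveCubeRoot

theorem crank19_product_identity {R : Type*} [CommRing R] (ω : R)
    (hω : ω ^ 2 + ω + 1 = 0) :
    (infiniteProd fun n =>
      factor 1 n *
      factor 1 (19 * n) ^ 7 *
      factor (ω ^ 2) (19 * n) *
      factor (Ring.inverse ω ^ 2) (19 * n) *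
      factor (ω ^ 4) (19 * n) *
      factor (Ring.inverse ω ^ 4) (19 * n) *
      factor (ω ^ 8) (19 * n) *
      factor (Ring.inverse ω ^ 8) (19 * n) *
      factor (ω ^ 10) (19 * n) *
      factor (Ring.inverse ω ^ 10) (19 * n) *
      factor (ω ^ 14) (19 * n) *
      factor (Ring.inverse ω ^ 14) (19 * n) *
      factor (ω ^ 16) (19 * n) *
      factor (Ring.inverse ω ^ 16) (19 * n) *
      Ring.inverse (factor (ω) n * factor (Ring.inverse ω) n)) =
    infiniteProd fun n =>
      factor (1 : R) n ^ 2 * factor (1 : R) (19 * n) * factor (1 : R) (57 * n) ^ 6 *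
      Ring.inverse (factor (1 : R) (3 * n)) := by
  refine infiniteProd_congr fun n hn => ?_
  simp only [inverse_eq_sq_of_sq_add_add_one hω, ← pow_mul, Nat.reduceMul,
    pow_add_three_of_sq_add_add_one hω, pow_one]
  rw [inverse_factor_mul_factor_sq hω hn, show 57 * n = 3 * (19 * n) by ring,
    ← factor_one_mul_factor_mul_factor_sq hω (19 * n)]
  ring
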